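/- (Variational principle for Poisson's equations, Theorem 3.1(3.2) of the paper.) Assume the Poisson-solution setting below with c = ∫_D u ξ dx > 0, and assume in addition that ℰ_β(h,h) ≥ 0 for every h ∈ M₀. Then ℰ_β(ũ,u) = ∫_D ũ ξ dx = ∫_D u ξ dx = c, and 1/ℰ_β(ũ,u) = inf over f ∈ M₁ of (sup over g ∈ M₀ of ℰ_β(f−g, f+g)), the inner supremum and outer infimum being taken in the extended reals; moreover the value is attained at f = (w+w̃)/2 and g = (w−w̃)/2. -/

import Mathlib

open MeasureTheory

noncomputable section

/-- Partial derivative of `f` in the `i`-th coordinate direction. -/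
def pd {d : ℕ} (f : (Fin d → ℝ) → ℝ) (i : Fin d) (x : Fin d → ℝ) : ℝ :=
  fderiv ℝ f x (Pi.single i 1)

/-- Divergence of a vector field on `ℝ^d`: `div F = Σ_i ∂_i F_i`. -/
def divg {d : ℕ} (F : (Fin d → ℝ) → (Fin d → ℝ)) (x : Fin d → ℝ) : ℝ :=
  ∑ i, fderiv ℝ (fun y => F y i) x (Pi.single i 1)

/-- The vector field `a∇g`, i.e. `(a∇g)_i = Σ_j a_{ij} ∂_j g`. -/
def aGrad {d : ℕ} (a : (Fin d → ℝ) → Matrix (Fin d) (Fin d) ℝ)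
    (g : (Fin d → ℝ) → ℝ) (x : Fin d → ℝ) : Fin d → ℝ :=
  fun i => ∑ j, a x i j * pd g j x

/-- The operator `Lg = ∇·(a∇g) + b·∇g`. -/
def Lop {d : ℕ} (a : (Fin d → ℝ) → Matrix (Fin d) (Fin d) ℝ)
    (b : (Fin d → ℝ) → (Fin d → ℝ)) (g : (Fin d → ℝ) → ℝ) (x : Fin d → ℝ) : ℝ :=
  divg (aGrad a g) x + ∑ i, b x i * pd g i x

/-- The formal adjoint `L̃f = ∇·(a∇f) − b·∇f − div(b) f`. -/
def Ladj {d : ℕ} (a : (Fin d → ℝ) → Matrix (Fin d) (Fin d) ℝ)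
    (b : (Fin d → ℝ) → (Fin d → ℝ)) (f : (Fin d → ℝ) → ℝ) (x : Fin d → ℝ) : ℝ :=
  divg (aGrad a f) x - (∑ i, b x i * pd f i x) - divg b x * f x

/-- `∇f · a ∇g = Σ_{i,j} (∂_i f) a_{ij} (∂_j g)`. -/
def quadF {d : ℕ} (a : (Fin d → ℝ) → Matrix (Fin d) (Fin d) ℝ)
    (f g : (Fin d → ℝ) → ℝ) (x : Fin d → ℝ) : ℝ :=
  ∑ i, ∑ j, pd f i x * a x i j * pd g j x

/-- `f` is C² on an open neighborhood of the closure of `D`. -/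
def C2Near {d : ℕ} (D : Set (Fin d → ℝ)) (f : (Fin d → ℝ) → ℝ) : Prop :=
  ∃ U : Set (Fin d → ℝ), IsOpen U ∧ closure D ⊆ U ∧ ContDiffOn ℝ 2 f U

/-- A vector field is C¹ on an open neighborhood of the closure of `D`. -/
def C1NearVF {d : ℕ} (D : Set (Fin d → ℝ)) (F : (Fin d → ℝ) → (Fin d → ℝ)) : Prop :=
  ∃ U : Set (Fin d → ℝ), IsOpen U ∧ closure D ⊆ U ∧ ∀ i, ContDiffOn ℝ 1 (fun x => F x i) U

/-- `D` has the divergence property: `∫_D div F = 0` for every vector field `F` which is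
C¹ on an open neighborhood of the closure of `D` and vanishes on the frontier of `D`. -/
def DivProp {d : ℕ} (D : Set (Fin d → ℝ)) : Prop :=
  ∀ F : (Fin d → ℝ) → (Fin d → ℝ), C1NearVF D F → (∀ x ∈ frontier D, F x = 0) →
    ∫ x in D, divg F x = 0

/-- The bilinear form `ℰ_β(f,g) = ∫_D f ((β−L)g) dx`. -/
def Eform {d : ℕ} (D : Set (Fin d → ℝ)) (a : (Fin d → ℝ) → Matrix (Fin d) (Fin d) ℝ)
    (b : (Fin d → ℝ) → (Fin d → ℝ)) (β : ℝ) (f g : (Fin d → ℝ) → ℝ) : ℝ :=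
  ∫ x in D, f x * (β * g x - Lop a b g x)

/-- `M_δ`: functions that are C² near the closure of `D`, vanish on `∂D`, and have
`∫_D h ξ dx = δ`. -/
def MemM {d : ℕ} (D : Set (Fin d → ℝ)) (ξ : (Fin d → ℝ) → ℝ) (δ : ℝ)
    (h : (Fin d → ℝ) → ℝ) : Prop :=
  C2Near D h ∧ (∀ x ∈ frontier D, h x = 0) ∧ (∫ x in D, h x * ξ x) = δ

/-!
Applying the divergence property to `f a∇g - g a∇f + f g b` gives Green's identity
`∫_D f Lg = ∫_D g L̃f` for admissible `f, g`, so `ℰ_β` is a bilinear form on the admissible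
functions with `ℰ_β(h, u) = ℰ_β(ũ, h) = ∫_D h ξ`. In particular `ℰ_β(ũ, u)` equals both
`∫_D ũ ξ` and `∫_D u ξ = c`.

The minimax is then linear algebra with `w = u/c`, `w̃ = ũ/c`. For `f ∈ M₁` the choice
`g = w - f ∈ M₀` gives `ℰ_β(f - g, f + g) = ℰ_β(2f - w, w) = 1/c`, so every inner supremum is
at least `1/c`. At `f = w̄`, writing `g = ŵ + t` with `t ∈ M₀`,
`ℰ_β(w̄ - g, w̄ + g) = ℰ_β(w̃ - t, w + t) = 1/c - ℰ_β(t, t) ≤ 1/c`.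
-/

section Saddle

theorem iInf_iSup_eq_of_saddle {α ι ι' : Type*} [CompleteLattice α] {F : ι → ι' → α} {v : α}
    (i₀ : ι) (hi₀ : ∀ j, F i₀ j ≤ v) (hlow : ∀ i, ∃ j, v ≤ F i j) :
    ⨆ j, F i₀ j = v ∧ ⨅ i, ⨆ j, F i j = v := by
  have hsup : ⨆ j, F i₀ j = v := by
    obtain ⟨j, hj⟩ := hlow i₀
    exact le_antisymm (iSup_le hi₀) (le_iSup_of_le j hj)
  refine ⟨hsup, le_antisymm (iInf_le_of_le i₀ hsup.le) (le_iInf fun i => ?_)⟩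
  obtain ⟨j, hj⟩ := hlow i
  exact le_iSup_of_le j hj

variable {V : Type*} [AddCommGroup V] [Module ℝ V]
  {B : V →ₗ[ℝ] V →ₗ[ℝ] ℝ} {ℓ : V →ₗ[ℝ] ℝ} {κ : ℝ} {w w' : V}

theorem LinearMap.apply_sub_add_sub_eq (hw : ∀ h, B h w = κ * ℓ h) (hℓw : ℓ w = 1)
    {f : V} (hf : ℓ f = 1) : B (f - (w - f)) (f + (w - f)) = κ := by
  rw [add_sub_cancel, hw, map_sub, map_sub, hf, hℓw]
  ring

/-- Writing `g = ĝ + t`, the value is `B w' w - B t t`: the cross terms cancel because `w` and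
`w'` represent the same functional on the two sides. -/
theorem LinearMap.apply_sub_add_le (hw : ∀ h, B h w = κ * ℓ h)
    (hw' : ∀ h, B w' h = κ * ℓ h) (hℓw' : ℓ w' = 1) (hpos : ∀ t, ℓ t = 0 → 0 ≤ B t t)
    {f ĝ : V} (hfĝ : f - ĝ = w') (hfĝ' : f + ĝ = w) {g : V} (hg : ℓ g = ℓ ĝ) :
    B (f - g) (f + g) ≤ κ := by
  obtain ⟨t, rfl⟩ : ∃ t, g = ĝ + t := ⟨g - ĝ, by abel⟩
  have ht : ℓ t = 0 := by rwa [map_add, add_eq_left] at hg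
  have h₁ : f - (ĝ + t) = w' - t := by rw [← hfĝ]; abel
  have h₂ : f + (ĝ + t) = w + t := by rw [← hfĝ']; abel
  have hval : B (f - (ĝ + t)) (f + (ĝ + t)) = κ - B t t := by
    rw [h₁, h₂, map_sub, LinearMap.sub_apply, map_add, map_add, hw, hw, hw', hℓw', ht]
    ring
  linarith [hpos t ht]

theorem LinearMap.iInf_iSup_apply_sub_add_eq (hw : ∀ h, B h w = κ * ℓ h)
    (hw' : ∀ h, B w' h = κ * ℓ h) (hℓw : ℓ w = 1) (hℓw' : ℓ w' = 1)
    (hpos : ∀ t, ℓ t = 0 → 0 ≤ B t t) {f₀ g₀ : V} (hfg : f₀ - g₀ = w') (hfg' : f₀ + g₀ = w) :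
    ℓ f₀ = 1 ∧ ℓ g₀ = 0 ∧ B (f₀ - g₀) (f₀ + g₀) = κ ∧
    ⨆ g : {g : V // ℓ g = 0}, (B (f₀ - g) (f₀ + g) : EReal) = κ ∧
    ⨅ f : {f : V // ℓ f = 1}, ⨆ g : {g : V // ℓ g = 0}, (B (f - g) (f + g) : EReal) = κ := by
  have hsub := congrArg ℓ hfg
  have hadd := congrArg ℓ hfg'
  rw [map_sub, hℓw'] at hsub
  rw [map_add, hℓw] at hadd
  have hf₀ : ℓ f₀ = 1 := by linarith
  have hg₀ : ℓ g₀ = 0 := by linarith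
  have hlow : ∀ f : {f : V // ℓ f = 1}, ∃ g : {g : V // ℓ g = 0},
      (κ : EReal) ≤ B (f.1 - g.1) (f.1 + g.1) := fun f =>
    ⟨⟨w - f.1, by rw [map_sub, hℓw, f.2, sub_self]⟩,
      EReal.coe_le_coe_iff.2 (apply_sub_add_sub_eq hw hℓw f.2).ge⟩
  have hsaddle := iInf_iSup_eq_of_saddle (F := fun (f : {f : V // ℓ f = 1})
    (g : {g : V // ℓ g = 0}) => (B (f.1 - g.1) (f.1 + g.1) : EReal)) ⟨f₀, hf₀⟩
    (fun g => EReal.coe_le_coe_iff.2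
      (apply_sub_add_le hw hw' hℓw' hpos hfg hfg' (g.2.trans hg₀.symm))) hlow
  refine ⟨hf₀, hg₀, ?_, hsaddle⟩
  rw [hfg, hfg', hw, hℓw', mul_one]

end Saddle

open Bornology

variable {d : ℕ}

section Calculus

variable {U : Set (Fin d → ℝ)} {a : (Fin d → ℝ) → Matrix (Fin d) (Fin d) ℝ}
  {b : (Fin d → ℝ) → (Fin d → ℝ)} {f g h : (Fin d → ℝ) → ℝ} {x : Fin d → ℝ}

theorem pd_contDiffOn (hU : IsOpen U) (hh : ContDiffOn ℝ 2 h U) (j : Fin d) :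
    ContDiffOn ℝ 1 (pd h j) U :=
  (hh.fderiv_of_isOpen hU (by norm_num)).clm_apply contDiffOn_const

theorem aGrad_contDiffOn (hU : IsOpen U) (ha : ∀ i j, ContDiff ℝ 1 fun x => a x i j)
    (hh : ContDiffOn ℝ 2 h U) (i : Fin d) : ContDiffOn ℝ 1 (fun x => aGrad a h x i) U :=
  ContDiffOn.sum fun j _ => (ha i j).contDiffOn.mul (pd_contDiffOn hU hh j)

theorem divg_continuousOn (hU : IsOpen U) {F : (Fin d → ℝ) → (Fin d → ℝ)}
    (hF : ∀ i, ContDiffOn ℝ 1 (fun x => F x i) U) : ContinuousOn (divg F) U :=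
  continuousOn_finsetSum _ fun i _ =>
    ((hF i).continuousOn_fderiv_of_isOpen hU le_rfl).clm_apply continuousOn_const

theorem Lop_continuousOn (hU : IsOpen U) (ha : ∀ i j, ContDiff ℝ 1 fun x => a x i j)
    (hb : ∀ i, ContDiff ℝ 1 fun x => b x i) (hh : ContDiffOn ℝ 2 h U) :
    ContinuousOn (Lop a b h) U :=
  (divg_continuousOn hU (aGrad_contDiffOn hU ha hh)).add <| continuousOn_finsetSum _
    fun i _ => (hb i).continuous.continuousOn.mul (pd_contDiffOn hU hh i).continuousOn

theorem Ladj_continuousOn (hU : IsOpen U) (ha : ∀ i j, ContDiff ℝ 1 fun x => a x i j)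
    (hb : ∀ i, ContDiff ℝ 1 fun x => b x i) (hh : ContDiffOn ℝ 2 h U) :
    ContinuousOn (Ladj a b h) U :=
  ((divg_continuousOn hU (aGrad_contDiffOn hU ha hh)).sub <| continuousOn_finsetSum _
    fun i _ => (hb i).continuous.continuousOn.mul (pd_contDiffOn hU hh i).continuousOn).sub
  ((divg_continuousOn isOpen_univ fun i => (hb i).contDiffOn).mono (Set.subset_univ U)
    |>.mul hh.continuousOn)

theorem pd_mul (hf : DifferentiableAt ℝ f x) (hg : DifferentiableAt ℝ g x) (i : Fin d) :
    pd (fun y => f y * g y) i x = pd f i x * g x + f x * pd g i x := by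
  simp only [pd, fderiv_fun_mul hf hg, add_apply,
    smul_apply, smul_eq_mul]
  ring

variable {F G : (Fin d → ℝ) → (Fin d → ℝ)}

theorem divg_add (hF : ∀ i, DifferentiableAt ℝ (fun y => F y i) x)
    (hG : ∀ i, DifferentiableAt ℝ (fun y => G y i) x) :
    divg (fun y => F y + G y) x = divg F x + divg G x := by
  simp only [divg, Pi.add_apply, ← Finset.sum_add_distrib, fderiv_fun_add (hF _) (hG _),
    add_apply]

theorem divg_sub (hF : ∀ i, DifferentiableAt ℝ (fun y => F y i) x)
    (hG : ∀ i, DifferentiableAt ℝ (fun y => G y i) x) :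
    divg (fun y => F y - G y) x = divg F x - divg G x := by
  simp only [divg, Pi.sub_apply, ← Finset.sum_sub_distrib, fderiv_fun_sub (hF _) (hG _),
    sub_apply]

theorem divg_smul (hf : DifferentiableAt ℝ f x) (hF : ∀ i, DifferentiableAt ℝ (fun y => F y i) x) :
    divg (fun y => f y • F y) x = ∑ i, pd f i x * F x i + f x * divg F x := by
  simp only [divg, Pi.smul_apply, smul_eq_mul, fderiv_fun_mul hf (hF _), Finset.mul_sum,
    ← Finset.sum_add_distrib, add_apply, smul_apply, pd]
  exact Finset.sum_congr rfl fun i _ => by ring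

theorem sum_pd_mul_aGrad_comm (hsym : ∀ i j, a x i j = a x j i) :
    ∑ i, pd f i x * aGrad a g x i = ∑ i, pd g i x * aGrad a f x i := by
  simp only [aGrad, Finset.mul_sum]
  rw [Finset.sum_comm]
  exact Finset.sum_congr rfl fun j _ => Finset.sum_congr rfl fun i _ => by rw [hsym i j]; ring

end Calculus

section Green

variable {D U : Set (Fin d → ℝ)} {a : (Fin d → ℝ) → Matrix (Fin d) (Fin d) ℝ}
  {b : (Fin d → ℝ) → (Fin d → ℝ)} {f g h : (Fin d → ℝ) → ℝ} {x : Fin d → ℝ}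

def greenField (a : (Fin d → ℝ) → Matrix (Fin d) (Fin d) ℝ) (b : (Fin d → ℝ) → (Fin d → ℝ))
    (f g : (Fin d → ℝ) → ℝ) : (Fin d → ℝ) → (Fin d → ℝ) :=
  fun y => f y • aGrad a g y - g y • aGrad a f y + (f y * g y) • b y

/-- The symmetry of `a` makes the first-order terms `∇f · a∇g - ∇g · a∇f` cancel. -/
theorem divg_greenField (hU : IsOpen U) (ha : ∀ i j, ContDiff ℝ 1 fun x => a x i j)
    (hb : ∀ i, ContDiff ℝ 1 fun x => b x i) (hf : ContDiffOn ℝ 2 f U) (hg : ContDiffOn ℝ 2 g U)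
    (hx : x ∈ U) (hsym : ∀ i j, a x i j = a x j i) :
    divg (greenField a b f g) x = f x * Lop a b g x - g x * Ladj a b f x := by
  have df : DifferentiableAt ℝ f x :=
    (hf.contDiffAt (hU.mem_nhds hx)).differentiableAt (by norm_num)
  have dg : DifferentiableAt ℝ g x :=
    (hg.contDiffAt (hU.mem_nhds hx)).differentiableAt (by norm_num)
  have dAf : ∀ i, DifferentiableAt ℝ (fun y => aGrad a f y i) x := fun i =>
    ((aGrad_contDiffOn hU ha hf i).contDiffAt (hU.mem_nhds hx)).differentiableAt one_ne_zero
  have dAg : ∀ i, DifferentiableAt ℝ (fun y => aGrad a g y i) x := fun i =>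
    ((aGrad_contDiffOn hU ha hg i).contDiffAt (hU.mem_nhds hx)).differentiableAt one_ne_zero
  have db : ∀ i, DifferentiableAt ℝ (fun y => b y i) x := fun i =>
    (hb i).differentiable one_ne_zero x
  have hbsum : ∑ i, pd (fun y => f y * g y) i x * b x i
      = g x * ∑ i, b x i * pd f i x + f x * ∑ i, b x i * pd g i x := by
    simp only [pd_mul df dg, Finset.mul_sum, ← Finset.sum_add_distrib]
    exact Finset.sum_congr rfl fun i _ => by ring
  unfold greenField
  rw [divg_add (F := fun y => f y • aGrad a g y - g y • aGrad a f y)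
      (G := fun y => (f y * g y) • b y) (fun i => (df.mul (dAg i)).sub (dg.mul (dAf i)))
      (fun i => (df.mul dg).mul (db i)),
    divg_sub (F := fun y => f y • aGrad a g y) (G := fun y => g y • aGrad a f y)
      (fun i => df.mul (dAg i)) (fun i => dg.mul (dAf i)),
    divg_smul (F := aGrad a g) df dAg, divg_smul (F := aGrad a f) dg dAf,
    divg_smul (f := fun y => f y * g y) (df.mul dg) db,
    sum_pd_mul_aGrad_comm hsym, hbsum, Lop, Ladj]
  ring

theorem C2Near.add (hf : C2Near D f) (hg : C2Near D g) : C2Near D (f + g) := by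
  obtain ⟨U, hU, hDU, hfU⟩ := hf
  obtain ⟨V, hV, hDV, hgV⟩ := hg
  exact ⟨U ∩ V, hU.inter hV, Set.subset_inter hDU hDV,
    (hfU.mono Set.inter_subset_left).add (hgV.mono Set.inter_subset_right)⟩

theorem C2Near.const_smul (r : ℝ) (hh : C2Near D h) : C2Near D (r • h) := by
  obtain ⟨U, hU, hDU, hhU⟩ := hh
  exact ⟨U, hU, hDU, hhU.const_smul r⟩

theorem C2Near.continuousOn (hh : C2Near D h) : ContinuousOn h (closure D) := by
  obtain ⟨U, -, hDU, hhU⟩ := hh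
  exact hhU.continuousOn.mono hDU

theorem C2Near.continuousOn_Lop (ha : ∀ i j, ContDiff ℝ 1 fun x => a x i j)
    (hb : ∀ i, ContDiff ℝ 1 fun x => b x i) (hh : C2Near D h) :
    ContinuousOn (Lop a b h) (closure D) := by
  obtain ⟨U, hU, hDU, hhU⟩ := hh
  exact (Lop_continuousOn hU ha hb hhU).mono hDU

theorem C2Near.continuousOn_Ladj (ha : ∀ i j, ContDiff ℝ 1 fun x => a x i j)
    (hb : ∀ i, ContDiff ℝ 1 fun x => b x i) (hh : C2Near D h) :
    ContinuousOn (Ladj a b h) (closure D) := by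
  obtain ⟨U, hU, hDU, hhU⟩ := hh
  exact (Ladj_continuousOn hU ha hb hhU).mono hDU

theorem Bornology.IsBounded.integrableOn_of_continuousOn_closure (hD : IsBounded D)
    {φ : (Fin d → ℝ) → ℝ} (hφ : ContinuousOn φ (closure D)) : IntegrableOn φ D :=
  (hφ.integrableOn_compact hD.isCompact_closure).mono_set subset_closure

variable (D) in
/-- `M_δ` is the affine hyperplane `∫_D h ξ = δ` of this space (see `memMEquiv`). -/
def admissible : Submodule ℝ ((Fin d → ℝ) → ℝ) where
  carrier := {h | C2Near D h ∧ ∀ x ∈ frontier D, h x = 0}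
  add_mem' := fun ⟨hf, hf0⟩ ⟨hg, hg0⟩ =>
    ⟨hf.add hg, fun x hx => by simp [hf0 x hx, hg0 x hx]⟩
  zero_mem' := ⟨⟨Set.univ, isOpen_univ, Set.subset_univ _, contDiffOn_const⟩, fun _ _ => rfl⟩
  smul_mem' := fun r _ ⟨hh, hh0⟩ => ⟨hh.const_smul r, fun x hx => by simp [hh0 x hx]⟩

theorem setIntegral_mul_Lop_eq_mul_Ladj (hD : IsOpen D) (hDb : IsBounded D) (hdiv : DivProp D)
    (ha : ∀ i j, ContDiff ℝ 1 fun x => a x i j) (hsym : ∀ x i j, a x i j = a x j i)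
    (hb : ∀ i, ContDiff ℝ 1 fun x => b x i) (hf : f ∈ admissible D) (hg : g ∈ admissible D) :
    ∫ x in D, f x * Lop a b g x = ∫ x in D, g x * Ladj a b f x := by
  obtain ⟨⟨Uf, hUf, hDUf, hfU⟩, hf0⟩ := hf
  obtain ⟨⟨Ug, hUg, hDUg, hgU⟩, hg0⟩ := hg
  have hU := hUf.inter hUg
  have hDU := Set.subset_inter hDUf hDUg
  replace hfU : ContDiffOn ℝ 2 f (Uf ∩ Ug) := hfU.mono Set.inter_subset_left
  replace hgU : ContDiffOn ℝ 2 g (Uf ∩ Ug) := hgU.mono Set.inter_subset_right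
  have hC1 : C1NearVF D (greenField a b f g) := by
    refine ⟨Uf ∩ Ug, hU, hDU, fun i => ?_⟩
    have hf1 := hfU.of_le (by norm_num : (1 : WithTop ℕ∞) ≤ 2)
    have hg1 := hgU.of_le (by norm_num : (1 : WithTop ℕ∞) ≤ 2)
    exact ((hf1.mul (aGrad_contDiffOn hU ha hgU i)).sub
      (hg1.mul (aGrad_contDiffOn hU ha hfU i))).add ((hf1.mul hg1).mul (hb i).contDiffOn)
  have hzero := hdiv _ hC1 fun x hx => by simp [greenField, hf0 x hx, hg0 x hx]
  rw [setIntegral_congr_fun hD.measurableSet fun x hx =>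
    divg_greenField hU ha hb hfU hgU (hDU (subset_closure hx)) (hsym x),
    integral_sub (hDb.integrableOn_of_continuousOn_closure (φ := fun x => f x * Lop a b g x)
      ((hfU.continuousOn.mono hDU).mul ((Lop_continuousOn hU ha hb hgU).mono hDU)))
    (hDb.integrableOn_of_continuousOn_closure (φ := fun x => g x * Ladj a b f x)
      ((hgU.continuousOn.mono hDU).mul ((Ladj_continuousOn hU ha hb hfU).mono hDU)))] at hzero
  linarith

end Green

section Forms

variable {D : Set (Fin d → ℝ)} {a : (Fin d → ℝ) → Matrix (Fin d) (Fin d) ℝ}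
  {b : (Fin d → ℝ) → (Fin d → ℝ)} {f g : (Fin d → ℝ) → ℝ} {ψ : (Fin d → ℝ) → ℝ}

def integralAgainst (hDb : IsBounded D) (hψ : ContinuousOn ψ (closure D)) :
    admissible D →ₗ[ℝ] ℝ where
  toFun h := ∫ x in D, (h : (Fin d → ℝ) → ℝ) x * ψ x
  map_add' f g := by
    simp only [Submodule.coe_add, Pi.add_apply, add_mul]
    exact integral_add (hDb.integrableOn_of_continuousOn_closure (f.2.1.continuousOn.mul hψ))
      (hDb.integrableOn_of_continuousOn_closure (g.2.1.continuousOn.mul hψ))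
  map_smul' r f := by
    simp only [Submodule.coe_smul, Pi.smul_apply, smul_eq_mul, mul_assoc, integral_const_mul,
      RingHom.id_apply]

theorem Eform_eq_integral_Ladj (hD : IsOpen D) (hDb : IsBounded D) (hdiv : DivProp D)
    (ha : ∀ i j, ContDiff ℝ 1 fun x => a x i j) (hsym : ∀ x i j, a x i j = a x j i)
    (hb : ∀ i, ContDiff ℝ 1 fun x => b x i) (β : ℝ) (hf : f ∈ admissible D)
    (hg : g ∈ admissible D) :
    Eform D a b β f g = ∫ x in D, g x * (β * f x - Ladj a b f x) := by
  have hfg : IntegrableOn (fun x => β * (f x * g x)) D :=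
    hDb.integrableOn_of_continuousOn_closure
      (continuousOn_const.mul (hf.1.continuousOn.mul hg.1.continuousOn))
  have hfLg : IntegrableOn (fun x => f x * Lop a b g x) D :=
    hDb.integrableOn_of_continuousOn_closure (hf.1.continuousOn.mul (hg.1.continuousOn_Lop ha hb))
  have hgLf : IntegrableOn (fun x => g x * Ladj a b f x) D :=
    hDb.integrableOn_of_continuousOn_closure (hg.1.continuousOn.mul (hf.1.continuousOn_Ladj ha hb))
  calc Eform D a b β f g = ∫ x in D, (β * (f x * g x) - f x * Lop a b g x) := by
        unfold Eform; congr 1 with x; ring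
    _ = ∫ x in D, (β * (f x * g x) - g x * Ladj a b f x) := by
        rw [integral_sub hfg hfLg, integral_sub hfg hgLf,
          setIntegral_mul_Lop_eq_mul_Ladj hD hDb hdiv ha hsym hb hf hg]
    _ = _ := by congr 1 with x; ring

/-- `ℰ_β` is linear in `f` by definition and, through Green's identity, also in `g`. -/
def energyForm (hD : IsOpen D) (hDb : IsBounded D) (hdiv : DivProp D)
    (ha : ∀ i j, ContDiff ℝ 1 fun x => a x i j) (hsym : ∀ x i j, a x i j = a x j i)
    (hb : ∀ i, ContDiff ℝ 1 fun x => b x i) (β : ℝ) :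
    admissible D →ₗ[ℝ] admissible D →ₗ[ℝ] ℝ :=
  let withRight (g : admissible D) :=
    integralAgainst hDb ((continuousOn_const.mul g.2.1.continuousOn).sub
      (g.2.1.continuousOn_Lop ha hb) : ContinuousOn (fun x => β * g.1 x - Lop a b g x) _)
  let withLeft (f : admissible D) :=
    integralAgainst hDb ((continuousOn_const.mul f.2.1.continuousOn).sub
      (f.2.1.continuousOn_Ladj ha hb) : ContinuousOn (fun x => β * f.1 x - Ladj a b f x) _)
  LinearMap.mk₂ ℝ (fun f g => Eform D a b β f g)
    (fun f₁ f₂ g => map_add (withRight g) f₁ f₂) (fun r f g => map_smul (withRight g) r f)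
    (fun f g₁ g₂ => by
      simp only [Eform_eq_integral_Ladj hD hDb hdiv ha hsym hb β f.2, Submodule.coe_mem]
      exact map_add (withLeft f) g₁ g₂)
    (fun r f g => by
      simp only [Eform_eq_integral_Ladj hD hDb hdiv ha hsym hb β f.2, Submodule.coe_mem]
      exact map_smul (withLeft f) r g)

theorem energyForm_apply_eq_of_Lop_eq (hD : IsOpen D) (hDb : IsBounded D) (hdiv : DivProp D)
    (ha : ∀ i j, ContDiff ℝ 1 fun x => a x i j) (hsym : ∀ x i j, a x i j = a x j i)
    (hb : ∀ i, ContDiff ℝ 1 fun x => b x i) {β : ℝ} (hψ : ContinuousOn ψ (closure D))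
    (hf : f ∈ admissible D) (hfeq : ∀ x ∈ D, β * f x - Lop a b f x = ψ x) (h : admissible D) :
    energyForm hD hDb hdiv ha hsym hb β h ⟨f, hf⟩ = integralAgainst hDb hψ h :=
  setIntegral_congr_fun hD.measurableSet fun x hx => by rw [hfeq x hx]

theorem energyForm_apply_eq_of_Ladj_eq (hD : IsOpen D) (hDb : IsBounded D) (hdiv : DivProp D)
    (ha : ∀ i j, ContDiff ℝ 1 fun x => a x i j) (hsym : ∀ x i j, a x i j = a x j i)
    (hb : ∀ i, ContDiff ℝ 1 fun x => b x i) {β : ℝ} (hψ : ContinuousOn ψ (closure D))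
    (hf : f ∈ admissible D) (hfeq : ∀ x ∈ D, β * f x - Ladj a b f x = ψ x) (h : admissible D) :
    energyForm hD hDb hdiv ha hsym hb β ⟨f, hf⟩ h = integralAgainst hDb hψ h :=
  (Eform_eq_integral_Ladj hD hDb hdiv ha hsym hb β hf h.2).trans
    (setIntegral_congr_fun hD.measurableSet fun x hx => by rw [hfeq x hx])

end Forms

def memMEquiv {D : Set (Fin d → ℝ)} {ξ : (Fin d → ℝ) → ℝ} (hDb : IsBounded D)
    (hξ : ContinuousOn ξ (closure D)) (δ : ℝ) :
    {h // MemM D ξ δ h} ≃ {h : admissible D // integralAgainst hDb hξ h = δ} where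
  toFun h := ⟨⟨h.1, h.2.1, h.2.2.1⟩, h.2.2.2⟩
  invFun h := ⟨h.1.1, h.1.2.1, h.1.2.2, h.2⟩
  left_inv _ := rfl
  right_inv _ := rfl

theorem stmt8_general {d : ℕ} (D : Set (Fin d → ℝ)) (hD : IsOpen D)
    (hDb : Bornology.IsBounded D) (hdiv : DivProp D)
    (a : (Fin d → ℝ) → Matrix (Fin d) (Fin d) ℝ)
    (ha : ∀ i j, ContDiff ℝ 1 (fun x => a x i j))
    (hsym : ∀ x i j, a x i j = a x j i)
    (b : (Fin d → ℝ) → (Fin d → ℝ)) (hb : ∀ i, ContDiff ℝ 1 (fun x => b x i))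
    (β : ℝ)
    (ξ : (Fin d → ℝ) → ℝ)
    (hξ : ∃ U : Set (Fin d → ℝ), IsOpen U ∧ closure D ⊆ U ∧ ContinuousOn ξ U)
    (u ut : (Fin d → ℝ) → ℝ)
    (hu : C2Near D u) (hu0 : ∀ x ∈ frontier D, u x = 0)
    (hueq : ∀ x ∈ D, β * u x - Lop a b u x = ξ x)
    (hut : C2Near D ut) (hut0 : ∀ x ∈ frontier D, ut x = 0)
    (huteq : ∀ x ∈ D, β * ut x - Ladj a b ut x = ξ x)
    (c : ℝ) (hc : c = ∫ x in D, u x * ξ x) (hcpos : 0 < c)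
    (hE0 : ∀ h, MemM D ξ 0 h → 0 ≤ Eform D a b β h h)
    (wbar what : (Fin d → ℝ) → ℝ)
    (hwbar : ∀ x, wbar x = (u x / c + ut x / c) / 2)
    (hwhat : ∀ x, what x = (u x / c - ut x / c) / 2) :
    Eform D a b β ut u = c ∧ (∫ x in D, ut x * ξ x) = c ∧
    (⨅ f : {f : (Fin d → ℝ) → ℝ // MemM D ξ 1 f},
        ⨆ g : {g : (Fin d → ℝ) → ℝ // MemM D ξ 0 g},
          ((Eform D a b β (f.1 - g.1) (f.1 + g.1) : ℝ) : EReal))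
      = ((1 / Eform D a b β ut u : ℝ) : EReal) ∧
    MemM D ξ 1 wbar ∧ MemM D ξ 0 what ∧
    (⨆ g : {g : (Fin d → ℝ) → ℝ // MemM D ξ 0 g},
        ((Eform D a b β (wbar - g.1) (wbar + g.1) : ℝ) : EReal)) = ((1 / c : ℝ) : EReal) ∧
    Eform D a b β (wbar - what) (wbar + what) = 1 / c := by
  obtain ⟨U, -, hDU, hξU⟩ := hξ
  set ℓ := integralAgainst hDb (hξU.mono hDU)
  set B := energyForm hD hDb hdiv ha hsym hb β
  set u' : admissible D := ⟨u, hu, hu0⟩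
  set ut' : admissible D := ⟨ut, hut, hut0⟩
  have hBu := energyForm_apply_eq_of_Lop_eq hD hDb hdiv ha hsym hb (hξU.mono hDU) u'.2 hueq
  have hBut := energyForm_apply_eq_of_Ladj_eq hD hDb hdiv ha hsym hb (hξU.mono hDU) ut'.2 huteq
  have hEc : Eform D a b β ut u = c := (hBut u').trans hc.symm
  have hℓut : ℓ ut' = c := (hBu ut').symm.trans hEc
  set w := (1 / c) • u'
  set w' := (1 / c) • ut'
  obtain ⟨rfl, rfl⟩ : wbar = ((1 / 2 : ℝ) • (w + w') : admissible D) ∧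
      what = ((1 / 2 : ℝ) • (w - w') : admissible D) := by
    constructor <;> ext x <;>
      simp only [hwbar, hwhat, w, w', u', ut', Submodule.coe_smul, Submodule.coe_add,
        Submodule.coe_sub, Pi.smul_apply, Pi.add_apply, Pi.sub_apply, smul_eq_mul] <;> ring
  obtain ⟨hℓwbar, hℓwhat, hsaddle, hsup, hinf⟩ := B.iInf_iSup_apply_sub_add_eq (ℓ := ℓ)
    (κ := 1 / c) (fun h => by rw [map_smul, hBu, smul_eq_mul])
    (fun h => by rw [map_smul, LinearMap.smul_apply, hBut, smul_eq_mul])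
    (by rw [map_smul, smul_eq_mul]; field_simp; exact hc.symm)
    (by rw [map_smul, smul_eq_mul, hℓut]; field_simp)
    (fun t ht => hE0 t ⟨t.2.1, t.2.2, ht⟩) (f₀ := (1 / 2 : ℝ) • (w + w'))
    (g₀ := (1 / 2 : ℝ) • (w - w')) (by module) (by module)
  refine ⟨hEc, hℓut, ?_, ((memMEquiv hDb _ 1).symm ⟨_, hℓwbar⟩).2,
    ((memMEquiv hDb _ 0).symm ⟨_, hℓwhat⟩).2, ?_, hsaddle⟩
  · rw [hEc, ← hinf]
    exact (memMEquiv hDb _ 1).iInf_congr fun _ =>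
      ((memMEquiv hDb _ 0).iSup_congr fun _ => rfl).symm
  · rw [← hsup]
    exact (memMEquiv hDb _ 0).iSup_congr fun _ => rfl

/-- the variational principle (3.2): `1/ℰ_β(ũ,u) = inf_{f∈M₁} sup_{g∈M₀}
ℰ_β(f−g, f+g)` in the extended reals, attained at `f = w̄ = (w+w̃)/2`, `g = ŵ = (w−w̃)/2`. -/
theorem stmt8 {d : ℕ} (D : Set (Fin d → ℝ)) (hD : IsOpen D)
    (hDb : Bornology.IsBounded D) (hdiv : DivProp D)
    (a : (Fin d → ℝ) → Matrix (Fin d) (Fin d) ℝ)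
    (ha : ∀ i j, ContDiff ℝ 1 (fun x => a x i j))
    (hsym : ∀ x i j, a x i j = a x j i)
    (b : (Fin d → ℝ) → (Fin d → ℝ)) (hb : ∀ i, ContDiff ℝ 1 (fun x => b x i))
    (β : ℝ) (hβ : 0 ≤ β)
    (ξ : (Fin d → ℝ) → ℝ)
    (hξ : ∃ U : Set (Fin d → ℝ), IsOpen U ∧ closure D ⊆ U ∧ ContinuousOn ξ U)
    (u ut : (Fin d → ℝ) → ℝ)
    (hu : C2Near D u) (hu0 : ∀ x ∈ frontier D, u x = 0)
    (hueq : ∀ x ∈ D, β * u x - Lop a b u x = ξ x)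
    (hut : C2Near D ut) (hut0 : ∀ x ∈ frontier D, ut x = 0)
    (huteq : ∀ x ∈ D, β * ut x - Ladj a b ut x = ξ x)
    (c : ℝ) (hc : c = ∫ x in D, u x * ξ x) (hcpos : 0 < c)
    (hE0 : ∀ h, MemM D ξ 0 h → 0 ≤ Eform D a b β h h)
    (wbar what : (Fin d → ℝ) → ℝ)
    (hwbar : ∀ x, wbar x = (u x / c + ut x / c) / 2)
    (hwhat : ∀ x, what x = (u x / c - ut x / c) / 2) :
    Eform D a b β ut u = c ∧ (∫ x in D, ut x * ξ x) = c ∧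
    (⨅ f : {f : (Fin d → ℝ) → ℝ // MemM D ξ 1 f},
        ⨆ g : {g : (Fin d → ℝ) → ℝ // MemM D ξ 0 g},
          ((Eform D a b β (f.1 - g.1) (f.1 + g.1) : ℝ) : EReal))
      = ((1 / Eform D a b β ut u : ℝ) : EReal) ∧
    MemM D ξ 1 wbar ∧ MemM D ξ 0 what ∧
    (⨆ g : {g : (Fin d → ℝ) → ℝ // MemM D ξ 0 g},
        ((Eform D a b β (wbar - g.1) (wbar + g.1) : ℝ) : EReal)) = ((1 / c : ℝ) : EReal) ∧
    Eform D a b β (wbar - what) (wbar + what) = 1 / c :=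
  stmt8_general D hD hDb hdiv a ha hsym b hb β ξ hξ u ut hu hu0 hueq hut hut0 huteq c hc hcpos hE0
    wbar what hwbar hwhat
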